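/- Let G be an ordered group with Riesz interpolation, order unit u, and I an ideal of G. If τ₁, τ₂ are distinct extreme states on (G, u) and τ₂|_I is a scalar multiple of τ₁|_I, then τ₂|_I = 0. -/

import Mathlib

/-- The state space of an ordered abelian group `G` with order unit `u`. -/
def stateSet (G : Type*) [AddCommGroup G] [PartialOrder G] (u : G) :
    Set (G → ℝ) :=
  {f | (∀ a b : G, f (a + b) = f a + f b) ∧ (∀ a : G, 0 ≤ a → 0 ≤ f a) ∧ f u = 1}

/-! For a state `τ` and an ideal `I`, the function `x ↦ sup {τ a | a ∈ I, 0 ≤ a ≤ x}` is additive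
on the positive cone by Riesz decomposition, so it extends to a positive additive functional `F`
with `0 ≤ F ≤ τ`. If `τ` is extreme, `F` must be a multiple `λ τ`; as `F` agrees with `τ` on the
positive part of `I`, either `τ` vanishes on `I`, or `λ = 1` and `τ` is recovered from `τ|_I` by
taking suprema. If `τ₁|_I = 0` then `τ₂|_I = c τ₁|_I = 0`. Otherwise, if `τ₂|_I ≠ 0`, both states
are recovered from their restrictions to `I`, which are proportional with `c ≥ 0`; normalising at
the order unit forces `c = 1`, so `τ₁ = τ₂`. -/

open Set

section

variable {G : Type*} [AddCommGroup G] [PartialOrder G]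
variable {I : AddSubgroup G} {u x : G} {τ : G → ℝ}

def RieszInterpolation (G : Type*) [Preorder G] : Prop :=
  ∀ a₁ a₂ b₁ b₂ : G, a₁ ≤ b₁ → a₁ ≤ b₂ → a₂ ≤ b₁ → a₂ ≤ b₂ →
    ∃ z : G, a₁ ≤ z ∧ a₂ ≤ z ∧ z ≤ b₁ ∧ z ≤ b₂

def IsOrderUnit (u : G) : Prop :=
  0 ≤ u ∧ ∀ g : G, ∃ n : ℕ, -(n • u) ≤ g ∧ g ≤ n • u

def stateHom (hτ : τ ∈ stateSet G u) : G →+ ℝ :=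
  AddMonoidHom.mk' τ hτ.1

@[simp]
theorem stateHom_apply (hτ : τ ∈ stateSet G u) (g : G) :
    stateHom hτ g = τ g :=
  rfl

theorem apply_sub_of_mem_stateSet (hτ : τ ∈ stateSet G u) (a b : G) : τ (a - b) = τ a - τ b :=
  map_sub (stateHom hτ) a b

noncomputable def idealSup (I : AddSubgroup G) (τ : G → ℝ) (x : G) : ℝ :=
  sSup (τ '' {a | a ∈ I ∧ 0 ≤ a ∧ a ≤ x})

theorem mem_stateSet_div (φ : G →+ ℝ) (hφ : ∀ x, 0 ≤ x → 0 ≤ φ x) (hφu : 0 < φ u) :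
    (fun g => φ g / φ u) ∈ stateSet G u :=
  ⟨fun a b => by simp only [map_add, add_div], fun a ha => div_nonneg (hφ a ha) hφu.le,
    div_self hφu.ne'⟩

theorem idealSup_le {r : ℝ} (hx : 0 ≤ x) (h : ∀ a ∈ I, 0 ≤ a → a ≤ x → τ a ≤ r) :
    idealSup I τ x ≤ r :=
  csSup_le ⟨τ 0, 0, ⟨I.zero_mem, le_rfl, hx⟩, rfl⟩
    (forall_mem_image.2 fun a ha => h a ha.1 ha.2.1 ha.2.2)

theorem idealSup_eq_mul_of_eqOn {τ₁ τ₂ : G → ℝ} {c : ℝ} (hc : 0 ≤ c)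
    (h : ∀ a ∈ I, τ₂ a = c * τ₁ a) (x : G) : idealSup I τ₂ x = c * idealSup I τ₁ x := by
  rw [idealSup, idealSup, ← smul_eq_mul, ← Real.sSup_smul_of_nonneg hc, ← image_smul,
    image_image]
  exact congrArg sSup (image_congr fun a ha => h a ha.1)

variable [IsOrderedAddMonoid G]

theorem RieszInterpolation.exists_add_eq_of_le_add (hR : RieszInterpolation G) {a b c : G}
    (ha : 0 ≤ a) (hb : 0 ≤ b) (hc : 0 ≤ c) (h : c ≤ a + b) :
    ∃ a' b', 0 ≤ a' ∧ a' ≤ a ∧ 0 ≤ b' ∧ b' ≤ b ∧ a' + b' = c := by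
  obtain ⟨z, hcz, hz, hzc, hza⟩ :=
    hR (c - b) 0 c a (sub_le_self c hb) (sub_le_iff_le_add.2 h) hc ha
  exact ⟨z, c - z, hz, hza, sub_nonneg.2 hzc, sub_le_comm.1 hcz, add_sub_cancel z c⟩

theorem AddMonoidHom.eq_zero_of_nonneg_of_map_eq_zero {u : G} (hu : IsOrderUnit u)
    {φ : G →+ ℝ} (hφ : ∀ x, 0 ≤ x → 0 ≤ φ x) (hφu : φ u = 0) : φ = 0 := by
  have hmono : Monotone φ := fun x y h => by simpa using hφ (y - x) (sub_nonneg.2 h)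
  ext g
  obtain ⟨n, hlo, hhi⟩ := hu.2 g
  have hlo' := hmono hlo
  have hhi' := hmono hhi
  simp only [map_neg, map_nsmul, hφu, smul_zero, neg_zero] at hlo' hhi'
  exact le_antisymm hhi' hlo'

theorem AddMonoidHom.ext_nonneg [IsDirectedOrder G] {M : Type*} [AddGroup M] {φ ψ : G →+ M}
    (h : ∀ x, 0 ≤ x → φ x = ψ x) : φ = ψ := by
  ext g
  obtain ⟨y, hgy, hy⟩ := directed_of (· ≤ ·) g 0
  have hφ := map_sub φ y (y - g)
  have hψ := map_sub ψ y (y - g)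
  rw [sub_sub_cancel] at hφ hψ
  rw [hφ, hψ, h y hy, h _ (sub_nonneg.2 hgy)]

theorem exists_addMonoidHom_eq_on_nonneg [IsDirectedOrder G] (f : G → ℝ)
    (hf : ∀ x y, 0 ≤ x → 0 ≤ y → f (x + y) = f x + f y) :
    ∃ F : G →+ ℝ, ∀ x, 0 ≤ x → F x = f x := by
  have hbound (g : G) : ∃ y, 0 ≤ y ∧ 0 ≤ y - g :=
    let ⟨y, hgy, hy⟩ := directed_of (· ≤ ·) g 0
    ⟨y, hy, sub_nonneg.2 hgy⟩
  choose y hy hyg using hbound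
  have hwd (p q : G) (hp : 0 ≤ p) (hq : 0 ≤ q) :
      f (y (p - q)) - f (y (p - q) - (p - q)) = f p - f q := by
    have h₁ := hf (y (p - q)) q (hy _) hq
    have h₂ := hf p (y (p - q) - (p - q)) hp (hyg _)
    rw [show y (p - q) + q = p + (y (p - q) - (p - q)) by abel] at h₁
    linarith
  refine ⟨AddMonoidHom.mk' (fun g => f (y g) - f (y g - g)) fun g h => ?_, fun x hx => ?_⟩
  · have hsum := hwd (y g + y h) ((y g - g) + (y h - h))
      (add_nonneg (hy g) (hy h)) (add_nonneg (hyg g) (hyg h))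
    rw [show y g + y h - ((y g - g) + (y h - h)) = g + h by abel, hf _ _ (hy g) (hy h),
      hf _ _ (hyg g) (hyg h)] at hsum
    simp only [hsum]
    ring
  · have hf0 : f 0 = 0 := by simpa using hf 0 0 le_rfl le_rfl
    simpa [hf0] using hwd x 0 hx le_rfl

theorem monotone_of_mem_stateSet (hτ : τ ∈ stateSet G u) : Monotone τ := fun x y h => by
  simpa [apply_sub_of_mem_stateSet hτ] using hτ.2.1 (y - x) (sub_nonneg.2 h)

theorem eq_mul_of_mem_extremePoints_stateSet (hu : IsOrderUnit u)
    (hτ : τ ∈ (stateSet G u).extremePoints ℝ) (φ : G →+ ℝ) (hφ : ∀ x, 0 ≤ x → 0 ≤ φ x)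
    (hφτ : ∀ x, 0 ≤ x → φ x ≤ τ x) (g : G) : φ g = φ u * τ g := by
  set ψ := stateHom hτ.1 - φ
  have hψ (x : G) (hx : 0 ≤ x) : 0 ≤ ψ x := by simpa [ψ] using hφτ x hx
  have hψu : ψ u = 1 - φ u := by simp [ψ, hτ.1.2.2]
  rcases (hφ u hu.1).eq_or_lt with hφu | hφu
  · simp [AddMonoidHom.eq_zero_of_nonneg_of_map_eq_zero hu hφ hφu.symm]
  rcases (hψ u hu.1).eq_or_lt with hψ0 | hψ0
  · have := DFunLike.congr_fun (AddMonoidHom.eq_zero_of_nonneg_of_map_eq_zero hu hψ hψ0.symm) g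
    simp only [ψ, AddMonoidHom.sub_apply, stateHom_apply, AddMonoidHom.zero_apply] at this
    rw [show φ u = 1 by linarith, one_mul]
    linarith
  have hseg : τ ∈ openSegment ℝ (fun g => φ g / φ u) (fun g => ψ g / ψ u) := by
    refine ⟨φ u, ψ u, hφu, hψ0, by rw [hψu]; ring, funext fun g => ?_⟩
    simp only [Pi.add_apply, Pi.smul_apply, smul_eq_mul]
    rw [mul_div_cancel₀ _ hφu.ne', mul_div_cancel₀ _ hψ0.ne']
    simp [ψ]
  have := congrFun (hτ.2 (mem_stateSet_div φ hφ hφu) (mem_stateSet_div ψ hψ hψ0) hseg) g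
  rw [← this, mul_div_cancel₀ _ hφu.ne']

theorem stateSet_ext_nonneg [IsDirectedOrder G] {τ₁ τ₂ : G → ℝ} (hτ₁ : τ₁ ∈ stateSet G u)
    (hτ₂ : τ₂ ∈ stateSet G u) (h : ∀ x, 0 ≤ x → τ₁ x = τ₂ x) : τ₁ = τ₂ :=
  congrArg DFunLike.coe (AddMonoidHom.ext_nonneg (φ := stateHom hτ₁) (ψ := stateHom hτ₂) h)

theorem le_idealSup (hτ : τ ∈ stateSet G u) {a : G} (ha : a ∈ I) (ha0 : 0 ≤ a) (hax : a ≤ x) :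
    τ a ≤ idealSup I τ x :=
  le_csSup ⟨τ x, forall_mem_image.2 fun _ hb => monotone_of_mem_stateSet hτ hb.2.2⟩
    (mem_image_of_mem τ ⟨ha, ha0, hax⟩)

theorem idealSup_le_apply (hτ : τ ∈ stateSet G u) (hx : 0 ≤ x) : idealSup I τ x ≤ τ x :=
  idealSup_le hx fun _ _ _ hax => monotone_of_mem_stateSet hτ hax

theorem idealSup_nonneg (hτ : τ ∈ stateSet G u) (hx : 0 ≤ x) : 0 ≤ idealSup I τ x := by
  simpa [show τ 0 = 0 from map_zero (stateHom hτ)] using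
    le_idealSup (I := I) hτ I.zero_mem le_rfl hx

theorem idealSup_of_mem (hτ : τ ∈ stateSet G u) {a : G} (ha : a ∈ I) (ha0 : 0 ≤ a) :
    idealSup I τ a = τ a :=
  (idealSup_le_apply hτ ha0).antisymm (le_idealSup hτ ha ha0 le_rfl)

theorem idealSup_add (hτ : τ ∈ stateSet G u) (hR : RieszInterpolation G)
    (hI : (I : Set G).OrdConnected) {y : G} (hx : 0 ≤ x) (hy : 0 ≤ y) :
    idealSup I τ (x + y) = idealSup I τ x + idealSup I τ y := by
  apply le_antisymm
  · refine idealSup_le (add_nonneg hx hy) fun a ha ha0 haxy => ?_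
    obtain ⟨a', b', ha'0, ha'x, hb'0, hb'y, rfl⟩ := hR.exists_add_eq_of_le_add hx hy ha0 haxy
    have ha' : a' ∈ I := hI.out I.zero_mem ha ⟨ha'0, le_add_of_nonneg_right hb'0⟩
    have hb' : b' ∈ I := hI.out I.zero_mem ha ⟨hb'0, le_add_of_nonneg_left ha'0⟩
    rw [hτ.1]
    exact add_le_add (le_idealSup hτ ha' ha'0 ha'x) (le_idealSup hτ hb' hb'0 hb'y)
  · rw [← le_sub_iff_add_le]
    refine idealSup_le hx fun a ha ha0 hax => ?_
    rw [le_sub_comm]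
    refine idealSup_le hy fun b hb hb0 hby => ?_
    rw [le_sub_iff_add_le', ← hτ.1]
    exact le_idealSup hτ (I.add_mem ha hb) (add_nonneg ha0 hb0) (add_le_add hax hby)

theorem exists_addMonoidHom_eq_idealSup [IsDirectedOrder G] (hτ : τ ∈ stateSet G u)
    (hR : RieszInterpolation G) (hI : (I : Set G).OrdConnected) :
    ∃ F : G →+ ℝ, ∀ x, 0 ≤ x → F x = idealSup I τ x :=
  exists_addMonoidHom_eq_on_nonneg _ fun _ _ hx hy => idealSup_add hτ hR hI hx hy

theorem eqOn_zero_or_idealSup_eq_of_mem_extremePoints [IsDirectedOrder G]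
    (hR : RieszInterpolation G) (hu : IsOrderUnit u) (hI : (I : Set G).OrdConnected)
    (hIdir : ∀ x ∈ I, ∃ a ∈ I, ∃ b ∈ I, 0 ≤ a ∧ 0 ≤ b ∧ x = a - b)
    (hτ : τ ∈ (stateSet G u).extremePoints ℝ) :
    (∀ a ∈ I, τ a = 0) ∨ ∀ x, 0 ≤ x → idealSup I τ x = τ x := by
  obtain ⟨F, hF⟩ := exists_addMonoidHom_eq_idealSup hτ.1 hR hI
  have hFτ := eq_mul_of_mem_extremePoints_stateSet hu hτ F
    (fun x hx => (hF x hx).symm ▸ idealSup_nonneg hτ.1 hx)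
    (fun x hx => (hF x hx).symm ▸ idealSup_le_apply hτ.1 hx)
  by_cases hFu : F u = 1
  · exact Or.inr fun x hx => by rw [← hF x hx, hFτ, hFu, one_mul]
  left
  have hpos (a : G) (ha : a ∈ I) (ha0 : 0 ≤ a) : τ a = 0 := by
    by_contra hne
    have := hFτ a
    rw [hF a ha0, idealSup_of_mem hτ.1 ha ha0, eq_comm, mul_eq_right₀ hne] at this
    exact hFu this
  intro x hx
  obtain ⟨a, ha, b, hb, ha0, hb0, rfl⟩ := hIdir x hx
  rw [apply_sub_of_mem_stateSet hτ.1, hpos a ha ha0, hpos b hb hb0, sub_zero]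

end

/-- Distinct extreme states that are proportional on an ideal must both vanish
there: if `G` has Riesz interpolation with order unit `u`, `I` is an ideal,
`τ₁ ≠ τ₂` are extreme states on `(G, u)`, and `τ₂|_I` is a scalar multiple of
`τ₁|_I`, then `τ₂|_I = 0`. -/
theorem stmt8 {G : Type*} [AddCommGroup G] [PartialOrder G]
    (hadd : ∀ g h x : G, g ≤ h → g + x ≤ h + x)
    (hdir : ∀ g h : G, ∃ y : G, g ≤ y ∧ h ≤ y)
    (hRiesz : ∀ a₁ a₂ b₁ b₂ : G, a₁ ≤ b₁ → a₁ ≤ b₂ → a₂ ≤ b₁ → a₂ ≤ b₂ →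
      ∃ z : G, a₁ ≤ z ∧ a₂ ≤ z ∧ z ≤ b₁ ∧ z ≤ b₂)
    (u : G) (hu : 0 ≤ u ∧ ∀ g : G, ∃ n : ℕ, -(n • u) ≤ g ∧ g ≤ n • u)
    (I : AddSubgroup G)
    (hconv : ∀ g h x : G, g ∈ I → h ∈ I → g ≤ x → x ≤ h → x ∈ I)
    (hIdir : ∀ x ∈ I, ∃ a ∈ I, ∃ b ∈ I, 0 ≤ a ∧ 0 ≤ b ∧ x = a - b)
    (τ₁ τ₂ : G → ℝ)
    (hτ₁ : τ₁ ∈ Set.extremePoints ℝ (stateSet G u))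
    (hτ₂ : τ₂ ∈ Set.extremePoints ℝ (stateSet G u))
    (hne : τ₁ ≠ τ₂)
    (hprop : ∃ c : ℝ, ∀ x ∈ I, τ₂ x = c * τ₁ x) :
    ∀ x ∈ I, τ₂ x = 0 := by
  have : IsOrderedAddMonoid G := { add_le_add_left := fun g h hgh x => hadd g h x hgh }
  have : IsDirectedOrder G := ⟨hdir⟩
  have hI : (I : Set G).OrdConnected := ⟨fun g hg h hh x hx => hconv g h x hg hh hx.1 hx.2⟩
  obtain ⟨c, hc⟩ := hprop
  rcases eqOn_zero_or_idealSup_eq_of_mem_extremePoints hRiesz hu hI hIdir hτ₁ with h₁ | h₁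
  · intro x hx
    rw [hc x hx, h₁ x hx, mul_zero]
  rcases eqOn_zero_or_idealSup_eq_of_mem_extremePoints hRiesz hu hI hIdir hτ₂ with h₂ | h₂
  · exact h₂
  have hc0 : 0 ≤ c := by
    by_contra! hc0
    have : idealSup I τ₂ u ≤ 0 := idealSup_le hu.1 fun a ha ha0 _ => by
      rw [hc a ha]
      exact mul_nonpos_of_nonpos_of_nonneg hc0.le (hτ₁.1.2.1 a ha0)
    rw [h₂ u hu.1, hτ₂.1.2.2] at this
    exact one_pos.not_ge this
  have hpos (x : G) (hx : 0 ≤ x) : τ₂ x = c * τ₁ x := by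
    rw [← h₁ x hx, ← h₂ x hx, idealSup_eq_mul_of_eqOn hc0 hc]
  have hc1 : c = 1 := by simpa [hτ₁.1.2.2, hτ₂.1.2.2] using (hpos u hu.1).symm
  exact (hne (stateSet_ext_nonneg hτ₁.1 hτ₂.1 fun x hx => by rw [hpos x hx, hc1, one_mul])).elim
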